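/- Let σ be a distortion and Z an integrable real random variable with E[Z] = 1 and (1−α)·CTE_α(Z) ≤ ∫_α¹ σ(p) dp for all α ∈ [0,1). Then Z ≥ 0 almost surely. -/

import Mathlib

/-!
The quantile function `q` of `Z` pushes Lebesgue measure on `(0,1)` forward to the law of `Z`,
so `∫₀¹ q = E[Z] = 1`, while the hypothesis gives `∫_α¹ q ≤ ∫_α¹ σ ≤ ∫₀¹ σ = 1`. Hence
`∫₀^α q ≥ 0`, and since `q` is nondecreasing, `α q(α) ≥ ∫₀^α q ≥ 0`. Thus `q ≥ 0` on `(0,1)`,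
and `Z`, having the law of `q`, is nonnegative almost surely.
-/

open MeasureTheory Set
open scoped ENNReal

/-- The cumulative distribution function `F_Z(x) = P(Z ≤ x)` of a random variable `Z`. -/
noncomputable def cdfRV {Ω : Type*} [MeasurableSpace Ω] (P : Measure Ω) (Z : Ω → ℝ) (x : ℝ) : ℝ :=
  (P {ω | Z ω ≤ x}).toReal

/-- The generalized inverse (quantile function) `F_Z⁻¹(u) = inf {x : F_Z(x) ≥ u}`. -/
noncomputable def quantileRV {Ω : Type*} [MeasurableSpace Ω] (P : Measure Ω) (Z : Ω → ℝ)
    (u : ℝ) : ℝ :=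
  sInf {x : ℝ | u ≤ cdfRV P Z x}

/-- The conditional tail expectation `CTE_α(Z) = (1−α)⁻¹ ∫_α¹ F_Z⁻¹(p) dp`. -/
noncomputable def CTE {Ω : Type*} [MeasurableSpace Ω] (P : Measure Ω) (Z : Ω → ℝ)
    (α : ℝ) : ℝ :=
  (1 - α)⁻¹ * ∫ p in α..1, quantileRV P Z p

open ProbabilityTheory Filter Topology

/-- Meaningful only for `u ∈ (0,1)`: otherwise the set is unbounded below or empty and `sInf`
returns `0`. -/
noncomputable def quantile (μ : Measure ℝ) (u : ℝ) : ℝ := sInf {x | u ≤ cdf μ x}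

section Quantile

variable (μ : Measure ℝ)

lemma nonempty_le_cdf {u : ℝ} (hu : u < 1) : {x | u ≤ cdf μ x}.Nonempty :=
  ((tendsto_cdf_atTop μ).eventually (eventually_gt_nhds hu)).exists.imp fun _ hx => hx.le

lemma bddBelow_le_cdf {u : ℝ} (hu : 0 < u) : BddBelow {x | u ≤ cdf μ x} := by
  obtain ⟨x₀, hx₀⟩ := ((tendsto_cdf_atBot μ).eventually (eventually_lt_nhds hu)).exists
  refine ⟨x₀, fun y hy => le_of_not_gt fun hyx => ?_⟩
  exact (hy.trans (monotone_cdf μ hyx.le)).not_gt hx₀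

lemma le_cdf_quantile {u : ℝ} (h0 : 0 < u) (h1 : u < 1) : u ≤ cdf μ (quantile μ u) := by
  have hbdd := bddBelow_le_cdf μ h0
  have : (𝓝[{x | u ≤ cdf μ x}] (quantile μ u)).NeBot :=
    mem_closure_iff_nhdsWithin_neBot.1 (csInf_mem_closure (nonempty_le_cdf μ h1) hbdd)
  -- the infimum is approached from the right, where `cdf` is continuous
  have hlim : Tendsto (cdf μ) (𝓝[{x | u ≤ cdf μ x}] (quantile μ u))
      (𝓝 (cdf μ (quantile μ u))) :=
    ((cdf μ).right_continuous _).mono_left (nhdsWithin_mono _ fun _ hy => csInf_le hbdd hy)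
  exact ge_of_tendsto hlim (eventually_nhdsWithin_of_forall fun _ hy => hy)

lemma quantile_le_iff {u x : ℝ} (h0 : 0 < u) (h1 : u < 1) :
    quantile μ u ≤ x ↔ u ≤ cdf μ x :=
  ⟨fun h => (le_cdf_quantile μ h0 h1).trans (monotone_cdf μ h),
    fun h => csInf_le (bddBelow_le_cdf μ h0) h⟩

lemma monotoneOn_quantile : MonotoneOn (quantile μ) (Ioo 0 1) := fun _ hu _ hv huv =>
  csInf_le_csInf (bddBelow_le_cdf μ hu.1) (nonempty_le_cdf μ hv.2) fun _ hx => huv.trans hx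

lemma aemeasurable_quantile : AEMeasurable (quantile μ) (volume.restrict (Ioo 0 1)) :=
  aemeasurable_restrict_of_monotoneOn measurableSet_Ioo (monotoneOn_quantile μ)

variable [IsProbabilityMeasure μ]

lemma map_quantile_volume_Ioo : (volume.restrict (Ioo 0 1)).map (quantile μ) = μ := by
  have : IsProbabilityMeasure (volume.restrict (Ioo (0:ℝ) 1)) := ⟨by simp⟩
  have := Measure.isProbabilityMeasure_map (aemeasurable_quantile μ)
  refine Measure.ext_of_Iic _ _ fun x => ?_
  have hpre : quantile μ ⁻¹' Iic x ∩ Ioo 0 1 = Ioc 0 (cdf μ x) ∩ Ioo 0 1 := by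
    ext u
    simp only [mem_inter_iff, mem_preimage, mem_Iic, mem_Ioc, mem_Ioo]
    constructor
    · rintro ⟨h, hu⟩; exact ⟨⟨hu.1, (quantile_le_iff μ hu.1 hu.2).1 h⟩, hu⟩
    · rintro ⟨h, hu⟩; exact ⟨(quantile_le_iff μ hu.1 hu.2).2 h.2, hu⟩
  rw [Measure.map_apply_of_aemeasurable (aemeasurable_quantile μ) measurableSet_Iic,
    Measure.restrict_apply' measurableSet_Ioo, hpre, ← Measure.restrict_apply measurableSet_Ioc,
    Measure.restrict_congr_set Ioo_ae_eq_Ioc, Measure.restrict_apply measurableSet_Ioc,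
    inter_eq_left.2 (Ioc_subset_Ioc_right (cdf_le_one μ x)), Real.volume_Ioc, sub_zero,
    ofReal_cdf]

lemma setIntegral_quantile : ∫ u in Ioo 0 1, quantile μ u = ∫ x, x ∂μ := by
  conv_rhs => rw [← map_quantile_volume_Ioo μ]
  exact (integral_map (aemeasurable_quantile μ) aestronglyMeasurable_id).symm

lemma integrableOn_quantile (h : Integrable id μ) : IntegrableOn (quantile μ) (Ioo 0 1) := by
  rw [← map_quantile_volume_Ioo μ] at h
  exact (integrable_map_measure aestronglyMeasurable_id (aemeasurable_quantile μ)).1 h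

lemma ae_nonneg_of_quantile_nonneg (h : ∀ u ∈ Ioo (0:ℝ) 1, 0 ≤ quantile μ u) :
    ∀ᵐ x ∂μ, 0 ≤ x := by
  rw [← map_quantile_volume_Ioo μ]
  exact (ae_map_iff (aemeasurable_quantile μ) measurableSet_Ici).2
    (ae_restrict_of_forall_mem measurableSet_Ioo h)

end Quantile

lemma cdfRV_eq_cdf_map {Ω : Type*} [MeasurableSpace Ω] (P : Measure Ω) [IsProbabilityMeasure P]
    {Z : Ω → ℝ} (hZ : AEMeasurable Z P) : cdfRV P Z = cdf (P.map Z) := by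
  have := Measure.isProbabilityMeasure_map hZ
  ext x
  rw [cdfRV, cdf_eq_real, measureReal_def, Measure.map_apply_of_aemeasurable hZ measurableSet_Iic]
  rfl

lemma quantileRV_eq_quantile_map {Ω : Type*} [MeasurableSpace Ω] (P : Measure Ω)
    [IsProbabilityMeasure P] {Z : Ω → ℝ} (hZ : AEMeasurable Z P) :
    quantileRV P Z = quantile (P.map Z) := by
  ext u
  rw [quantileRV, quantile, cdfRV_eq_cdf_map P hZ]

lemma one_sub_mul_CTE {Ω : Type*} [MeasurableSpace Ω] (P : Measure Ω) (Z : Ω → ℝ) {α : ℝ}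
    (hα : α < 1) : (1 - α) * CTE P Z α = ∫ p in α..1, quantileRV P Z p := by
  rw [CTE, ← mul_assoc, mul_inv_cancel₀ (sub_ne_zero.2 hα.ne'), one_mul]

lemma MonotoneOn.nonneg_of_setIntegral_Ioo_le {f : ℝ → ℝ} (hf : MonotoneOn f (Ioo 0 1))
    (hfi : IntegrableOn f (Ioo 0 1))
    (htail : ∀ α ∈ Ioo (0:ℝ) 1, ∫ u in Ioo α 1, f u ≤ ∫ u in Ioo 0 1, f u) :
    ∀ α ∈ Ioo (0:ℝ) 1, 0 ≤ f α := by
  intro α hα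
  have hsplit : ∫ u in Ioo 0 1, f u = (∫ u in Ioc 0 α, f u) + ∫ u in Ioo α 1, f u := by
    rw [← Ioc_union_Ioo_eq_Ioo hα.1.le hα.2, setIntegral_union
      (disjoint_left.2 fun _ hx hx' => hx.2.not_gt hx'.1) measurableSet_Ioo
      (hfi.mono_set (Ioc_subset_Ioo_right hα.2)) (hfi.mono_set (Ioo_subset_Ioo_left hα.1.le))]
  have hhead : ∫ u in Ioc 0 α, f u ≤ α * f α := by
    calc ∫ u in Ioc 0 α, f u ≤ ∫ _ in Ioc 0 α, f α :=
          setIntegral_mono_on (hfi.mono_set (Ioc_subset_Ioo_right hα.2))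
            (integrableOn_const (by simp) (by simp)) measurableSet_Ioc
            fun u hu => hf ⟨hu.1, hu.2.trans_lt hα.2⟩ hα hu.2
      _ = α * f α := by simp [hα.1.le]
  exact nonneg_of_mul_nonneg_right (by linarith [htail α hα]) hα.1

theorem statement_9_general {Ω : Type*} [MeasurableSpace Ω] (P : Measure Ω) [IsProbabilityMeasure P]
    (σ : ℝ → ℝ)
    (hσ_nonneg : ∀ u ∈ Icc (0:ℝ) 1, 0 ≤ σ u)
    (hσ_int : ∫ u in (0:ℝ)..1, σ u = 1)
    (Z : Ω → ℝ)
    (hZmean : (∫ ω, Z ω ∂P) = 1)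
    (hZdom : ∀ α ∈ Ico (0:ℝ) 1, (1 - α) * CTE P Z α ≤ ∫ p in α..1, σ p) :
    ∀ᵐ ω ∂P, 0 ≤ Z ω := by
  have hZint : Integrable Z P := .of_integral_ne_zero (hZmean ▸ one_ne_zero)
  have hZ : AEMeasurable Z P := hZint.aemeasurable
  have := Measure.isProbabilityMeasure_map hZ
  have hmean : ∫ u in Ioo 0 1, quantile (P.map Z) u = 1 := by
    rw [setIntegral_quantile]
    exact (integral_map hZ aestronglyMeasurable_id).trans hZmean
  have hσ_tail : ∀ α ∈ Icc (0:ℝ) 1, ∫ p in α..1, σ p ≤ 1 := fun α hα =>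
    (intervalIntegral.integral_mono_interval hα.1 hα.2 le_rfl
      (ae_restrict_of_forall_mem measurableSet_Ioc fun u hu => hσ_nonneg u (Ioc_subset_Icc_self hu))
      (intervalIntegral.intervalIntegrable_of_integral_ne_zero (by simp [hσ_int]))).trans
      hσ_int.le
  have hquantile_tail : ∀ α ∈ Ioo (0:ℝ) 1, ∫ u in Ioo α 1, quantile (P.map Z) u ≤ 1 :=
    fun α hα => by
      rw [← integral_Ioc_eq_integral_Ioo, ← intervalIntegral.integral_of_le hα.2.le,
        ← quantileRV_eq_quantile_map P hZ, ← one_sub_mul_CTE P Z hα.2]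
      exact (hZdom α ⟨hα.1.le, hα.2⟩).trans (hσ_tail α ⟨hα.1.le, hα.2.le⟩)
  refine ae_of_ae_map hZ (ae_nonneg_of_quantile_nonneg _ ?_)
  exact (monotoneOn_quantile _).nonneg_of_setIntegral_Ioo_le
    (integrableOn_quantile _ ((integrable_map_measure aestronglyMeasurable_id hZ).2 hZint))
    fun α hα => (hquantile_tail α hα).trans hmean.ge

/-- if `σ` is a distortion and `Z` is integrable with `E[Z] = 1` and
`(1−α)·CTE_α(Z) ≤ ∫_α¹ σ(p) dp` for all `α ∈ [0,1)`, then `Z ≥ 0` almost surely. -/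
theorem statement_9 {Ω : Type*} [MeasurableSpace Ω] (P : Measure Ω) [IsProbabilityMeasure P]
    (σ : ℝ → ℝ)
    (hσ_nonneg : ∀ u ∈ Icc (0:ℝ) 1, 0 ≤ σ u)
    (hσ_mono : MonotoneOn σ (Icc (0:ℝ) 1))
    (hσ_int : ∫ u in (0:ℝ)..1, σ u = 1)
    (Z : Ω → ℝ) (hZint : Integrable Z P)
    (hZmean : (∫ ω, Z ω ∂P) = 1)
    (hZdom : ∀ α ∈ Ico (0:ℝ) 1, (1 - α) * CTE P Z α ≤ ∫ p in α..1, σ p) :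
    ∀ᵐ ω ∂P, 0 ≤ Z ω :=
  statement_9_general P σ hσ_nonneg hσ_int Z hZmean hZdom
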